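/- Let δ ∈ [0, 1/2] and let m be a positive integer. Let Y = (Y1, …, Ym) be a random vector with {0,1}-valued components (with arbitrary correlation among the components), let W be a random variable taking values in a finite type, and let N1, …, Nm be i.i.d. {0,1}-valued random variables with P(Nk = 1) = δ such that (N1, …, Nm) is independent of the pair (Y, W). Set Xk = Yk ⊕ Nk for k = 1, …, m. Then H(X1, …, Xm | W) ≥ m · h2( δ ⋆ h2⁻¹( H(Y1, …, Ym | W) / m ) ). (This is the m-letter superadditivity of Witsenhausen's conditional entropy bound, specialized to the binary symmetric channel: the bound for the product channel is at least m times the single-letter bound evaluated at the per-letter conditional entropy.) -/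

import Mathlib

open MeasureTheory

/-- Binary entropy function (base 2), with the convention `0 * log₂ 0 = 0`
(automatic since `Real.logb 2 0 = 0`). -/
noncomputable def h2 (p : ℝ) : ℝ :=
  -(p * Real.logb 2 p) - (1 - p) * Real.logb 2 (1 - p)

/-- Inverse of the binary entropy function: for `q ≥ 0`, the unique `r ∈ [0, 1/2]`
with `h2 r = q` (realized as the infimum of the solution set); `0` for `q < 0`. -/
noncomputable def h2inv (q : ℝ) : ℝ :=
  if q < 0 then 0 else sInf {r : ℝ | 0 ≤ r ∧ r ≤ 1 / 2 ∧ h2 r = q}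

/-- Binary convolution `a ⋆ b = a(1-b) + (1-a)b`. -/
def bconv (a b : ℝ) : ℝ := a * (1 - b) + (1 - a) * b

/-- Shannon entropy (base 2, in bits) of a random variable `X` with values in a
finite type, with respect to the measure `μ`. -/
noncomputable def H2 {Ω S : Type*} [MeasurableSpace Ω] [Fintype S]
    (μ : Measure Ω) (X : Ω → S) : ℝ :=
  -∑ s : S, (μ (X ⁻¹' {s})).toReal * Real.logb 2 (μ (X ⁻¹' {s})).toReal

/-- Mutual information (base 2, in bits): `I(X;Y) = H(X) + H(Y) - H(X,Y)`. -/
noncomputable def MI2 {Ω S T : Type*} [MeasurableSpace Ω] [Fintype S] [Fintype T]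
    (μ : Measure Ω) (X : Ω → S) (Y : Ω → T) : ℝ :=
  H2 μ X + H2 μ Y - H2 μ (fun ω => (X ω, Y ω))

/-- Conditional entropy (base 2, in bits): `H(X|W) = H(X,W) - H(W)`. -/
noncomputable def condH2 {Ω S T : Type*} [MeasurableSpace Ω] [Fintype S] [Fintype T]
    (μ : Measure Ω) (X : Ω → S) (W : Ω → T) : ℝ :=
  H2 μ (fun ω => (X ω, W ω)) - H2 μ W

/-- Conditional mutual information (base 2, in bits):
`I(X;Y|Z) = H(X|Z) + H(Y|Z) - H(X,Y|Z)`. -/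
noncomputable def condMI2 {Ω S T V : Type*} [MeasurableSpace Ω] [Fintype S] [Fintype T]
    [Fintype V] (μ : Measure Ω) (X : Ω → S) (Y : Ω → T) (Z : Ω → V) : ℝ :=
  condH2 μ X Z + condH2 μ Y Z - condH2 μ (fun ω => (X ω, Y ω)) Z


/-!
Write `φ(u) = h2 (δ ⋆ h2⁻¹ u)`. Mrs. Gerber's lemma says that `φ` is convex on `[0, 1]`: with
`r = h2⁻¹ u` and `L t = log ((1 - t) / t)`, one has `φ' u = (1 - 2δ) L (δ ⋆ r) / L r`, which
increases with `r` because `t (1 - t) L t / (1 - 2t)` increases on `(0, 1/2)`.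

Split off the first coordinate, `Y = (Y₁, Y')`. By the chain rule
`H(Y | W) = H(Y' | W) + H(Y₁ | Y', W)`, and likewise for `X`. Given `(Y', W)`, the bit `X₁` is `Y₁`
sent through a binary symmetric channel, so concavity of `h2` (averaging over `Y'` for fixed `X'`)
and convexity of `φ` (Jensen over `(Y', W)`) give `H(X₁ | X', W) ≥ φ (H(Y₁ | Y', W))`. By induction
`H(X' | W) ≥ n φ (H(Y' | W) / n)`, and the two bounds combine by convexity of `φ` in the form
`(n + 1) φ ((a + b) / (n + 1)) ≤ n φ (a / n) + φ b`.
-/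

open Real Set

lemma h2_eq_binEntropy_div (p : ℝ) : h2 p = binEntropy p / log 2 := by
  rw [h2, binEntropy, logb, logb, log_inv, log_inv]
  ring

lemma h2_zero : h2 0 = 0 := by simp [h2_eq_binEntropy_div]

lemma h2_half : h2 (1 / 2) = 1 := by
  rw [h2_eq_binEntropy_div, one_div, binEntropy_two_inv, div_self (log_pos one_lt_two).ne']

lemma h2_one_sub (p : ℝ) : h2 (1 - p) = h2 p := by
  rw [h2_eq_binEntropy_div, h2_eq_binEntropy_div, binEntropy_one_sub]

lemma h2_nonneg {p : ℝ} (h0 : 0 ≤ p) (h1 : p ≤ 1) : 0 ≤ h2 p := by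
  rw [h2_eq_binEntropy_div]
  exact div_nonneg (binEntropy_nonneg h0 h1) (log_pos one_lt_two).le

lemma h2_le_one (p : ℝ) : h2 p ≤ 1 := by
  rw [h2_eq_binEntropy_div, div_le_one (log_pos one_lt_two)]
  exact binEntropy_le_log_two

lemma continuous_h2 : Continuous h2 := by
  simp_rw [funext h2_eq_binEntropy_div]
  exact binEntropy_continuous.div_const _

lemma strictMonoOn_h2 : StrictMonoOn h2 (Icc 0 (1 / 2)) := by
  intro a ha b hb hab
  rw [h2_eq_binEntropy_div, h2_eq_binEntropy_div, div_lt_div_iff_of_pos_right (log_pos one_lt_two)]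
  rw [one_div] at ha hb
  exact binEntropy_strictMonoOn ha hb hab

lemma concaveOn_h2 : ConcaveOn ℝ (Icc 0 1) h2 := by
  simp_rw [funext h2_eq_binEntropy_div, div_eq_inv_mul]
  exact strictConcave_binEntropy.concaveOn.smul (inv_nonneg.2 (log_pos one_lt_two).le)

noncomputable def logOdds (x : ℝ) : ℝ := log (1 - x) - log x

lemma hasDerivAt_h2 {x : ℝ} (h0 : x ≠ 0) (h1 : x ≠ 1) :
    HasDerivAt h2 (logOdds x / log 2) x := by
  simp_rw [funext h2_eq_binEntropy_div]
  exact (hasDerivAt_binEntropy h0 h1).div_const _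

lemma h2_mem_Icc {p : ℝ} (hp : p ∈ Icc (0 : ℝ) 1) : h2 p ∈ Icc (0 : ℝ) 1 :=
  ⟨h2_nonneg hp.1 hp.2, h2_le_one p⟩

lemma h2_image_Icc : h2 '' Icc 0 (1 / 2) = Icc 0 1 := by
  refine Subset.antisymm (image_subset_iff.2 fun r hr => h2_mem_Icc ⟨hr.1, hr.2.trans (by norm_num)⟩) ?_
  have := intermediate_value_Icc (by norm_num : (0 : ℝ) ≤ 1 / 2) continuous_h2.continuousOn
  rwa [h2_zero, h2_half] at this

lemma h2inv_h2 {r : ℝ} (hr : r ∈ Icc (0 : ℝ) (1 / 2)) : h2inv (h2 r) = r := by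
  have hset : {x : ℝ | 0 ≤ x ∧ x ≤ 1 / 2 ∧ h2 x = h2 r} = {r} :=
    eq_singleton_iff_unique_mem.2 ⟨⟨hr.1, hr.2, rfl⟩,
      fun x ⟨hx0, hx2, hx⟩ => strictMonoOn_h2.injOn ⟨hx0, hx2⟩ hr hx⟩
  rw [h2inv, if_neg (not_lt.2 (h2_nonneg hr.1 (hr.2.trans (by norm_num)))), hset, csInf_singleton]

lemma h2inv_mem_Icc {u : ℝ} (hu : u ∈ Icc (0 : ℝ) 1) : h2inv u ∈ Icc (0 : ℝ) (1 / 2) := by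
  obtain ⟨r, hr, rfl⟩ := h2_image_Icc.symm ▸ hu
  rwa [h2inv_h2 hr]

lemma h2_h2inv {u : ℝ} (hu : u ∈ Icc (0 : ℝ) 1) : h2 (h2inv u) = u := by
  obtain ⟨r, hr, rfl⟩ := h2_image_Icc.symm ▸ hu
  rw [h2inv_h2 hr]

lemma h2inv_mem_Ioo {u : ℝ} (hu : u ∈ Ioo (0 : ℝ) 1) : h2inv u ∈ Ioo (0 : ℝ) (1 / 2) := by
  have hinv := h2_h2inv (Ioo_subset_Icc_self hu)
  obtain ⟨h0, h1⟩ := h2inv_mem_Icc (Ioo_subset_Icc_self hu)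
  refine ⟨h0.lt_of_ne ?_, h1.lt_of_ne ?_⟩ <;> rintro heq
  · rw [← heq, h2_zero] at hinv; exact hu.1.ne hinv
  · rw [heq, h2_half] at hinv; exact hu.2.ne' hinv

lemma monotoneOn_h2inv : MonotoneOn h2inv (Icc (0 : ℝ) 1) := by
  intro a ha b hb hab
  by_contra! hlt
  have := strictMonoOn_h2 (h2inv_mem_Icc hb) (h2inv_mem_Icc ha) hlt
  rw [h2_h2inv ha, h2_h2inv hb] at this
  exact (not_lt.2 hab) this

lemma continuousOn_h2inv : ContinuousOn h2inv (Icc (0 : ℝ) 1) := by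
  rw [continuousOn_iff_continuous_domRestrict]
  let g : Icc (0 : ℝ) 1 → Icc (0 : ℝ) (1 / 2) := fun u => ⟨h2inv u, h2inv_mem_Icc u.2⟩
  have hg : Continuous g :=
    Monotone.continuous_of_surjective (fun a b hab => monotoneOn_h2inv a.2 b.2 hab)
      fun r => ⟨⟨h2 r, h2_mem_Icc ⟨r.2.1, r.2.2.trans (by norm_num)⟩⟩,
        Subtype.ext (h2inv_h2 r.2)⟩
  exact continuous_subtype_val.comp hg

lemma bconv_eq (a b : ℝ) : bconv a b = a + (1 - 2 * a) * b := by
  rw [bconv]; ring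

lemma bconv_mem_Icc {a b : ℝ} (ha : a ∈ Icc (0 : ℝ) 1) (hb : b ∈ Icc (0 : ℝ) 1) :
    bconv a b ∈ Icc (0 : ℝ) 1 := by
  obtain ⟨ha0, ha1⟩ := ha
  obtain ⟨hb0, hb1⟩ := hb
  rw [bconv]
  constructor <;> nlinarith

lemma h2_bconv_h2inv_h2 (a : ℝ) {u : ℝ} (hu : u ∈ Icc (0 : ℝ) 1) :
    h2 (bconv a (h2inv (h2 u))) = h2 (bconv a u) := by
  rcases le_or_gt u (1 / 2) with h | h
  · rw [h2inv_h2 ⟨hu.1, h⟩]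
  · have hsymm : bconv a (1 - u) = 1 - bconv a u := by rw [bconv, bconv]; ring
    rw [← h2_one_sub u, h2inv_h2 ⟨by linarith [hu.2], by linarith⟩, hsymm, h2_one_sub]

lemma monotoneOn_Ioo_of_hasDerivAt_nonneg {f f' : ℝ → ℝ} {a b : ℝ}
    (hf : ∀ x ∈ Ioo a b, HasDerivAt f (f' x) x) (hf' : ∀ x ∈ Ioo a b, 0 ≤ f' x) :
    MonotoneOn f (Ioo a b) :=
  monotoneOn_of_hasDerivWithinAt_nonneg (convex_Ioo a b)
    (fun x hx => (hf x hx).continuousAt.continuousWithinAt)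
    (by rw [interior_Ioo]; exact fun x hx => (hf x hx).hasDerivWithinAt)
    (by rw [interior_Ioo]; exact hf')

lemma hasDerivAt_logOdds {x : ℝ} (h0 : x ≠ 0) (h1 : x ≠ 1) :
    HasDerivAt logOdds (-(x * (1 - x))⁻¹) x := by
  have h1' : 1 - x ≠ 0 := sub_ne_zero.2 h1.symm
  refine (((hasDerivAt_id' x).const_sub 1).log h1' |>.sub (hasDerivAt_log h0)).congr_deriv ?_
  field_simp
  ring

lemma logOdds_pos {x : ℝ} (h0 : 0 < x) (h1 : x < 1 / 2) : 0 < logOdds x :=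
  sub_pos.2 (log_lt_log h0 (by linarith))

/-- Since `logOdds t = log (1 + s) - log (1 - s)` for `s = 1 - 2t`, this is the first term of
its power series. -/
lemma two_mul_le_logOdds {t : ℝ} (h0 : 0 < t) (h1 : t ≤ 1 / 2) : 2 * (1 - 2 * t) ≤ logOdds t := by
  have hs : |1 - 2 * t| < 1 := abs_lt.2 ⟨by linarith, by linarith⟩
  have hsum := hasSum_log_sub_log_of_abs_lt_one hs
  have hL : log (1 + (1 - 2 * t)) - log (1 - (1 - 2 * t)) = logOdds t := by
    rw [logOdds, show 1 + (1 - 2 * t) = 2 * (1 - t) by ring, show 1 - (1 - 2 * t) = 2 * t by ring,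
      log_mul two_ne_zero (by linarith), log_mul two_ne_zero h0.ne']
    ring
  rw [hL] at hsum
  simpa using le_hasSum hsum 0 fun k _ => by
    have : 0 ≤ 1 - 2 * t := by linarith
    positivity

lemma monotoneOn_logOdds_mul_div :
    MonotoneOn (fun t => t * (1 - t) * logOdds t / (1 - 2 * t)) (Ioo 0 (1 / 2)) := by
  refine monotoneOn_Ioo_of_hasDerivAt_nonneg (f' := fun t =>
    (logOdds t * (1 - 2 * t + 2 * t ^ 2) - (1 - 2 * t)) / (1 - 2 * t) ^ 2) ?_ ?_
  · rintro t ⟨h0, h1⟩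
    have hnum : HasDerivAt (fun t => t * (1 - t) * logOdds t)
        ((1 - 2 * t) * logOdds t - 1) t := by
      refine (((hasDerivAt_id' t).mul ((hasDerivAt_id' t).const_sub 1)).mul
        (hasDerivAt_logOdds h0.ne' (by linarith))).congr_deriv ?_
      have : 1 - t ≠ 0 := by linarith
      simp only [Pi.mul_apply]
      field_simp
      ring
    refine (hnum.div (((hasDerivAt_id' t).const_mul 2).const_sub 1) (by linarith)).congr_deriv ?_
    ring
  · rintro t ⟨h0, h1⟩
    have hL := two_mul_le_logOdds h0 h1.le
    have hq : 0 < 1 - 2 * t + 2 * t ^ 2 := by nlinarith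
    apply div_nonneg _ (sq_nonneg _)
    nlinarith [sq_nonneg (1 - 2 * t)]

lemma bconv_mem_Ioc {δ r : ℝ} (hδ : δ ∈ Icc (0 : ℝ) (1 / 2)) (hr : r ∈ Ioo (0 : ℝ) (1 / 2)) :
    r ≤ bconv δ r ∧ bconv δ r ≤ 1 / 2 := by
  obtain ⟨hδ0, hδ1⟩ := hδ
  obtain ⟨hr0, hr1⟩ := hr
  rw [bconv_eq]
  constructor <;> nlinarith

/-- With `s = δ ⋆ r` one has `1 - 2 s = (1 - 2 δ)(1 - 2 r)`, so this is the monotonicity of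
`t (1 - t) logOdds t / (1 - 2 t)` between `r` and `s`. -/
lemma mul_logOdds_le_bconv {δ r : ℝ} (hδ : δ ∈ Icc (0 : ℝ) (1 / 2)) (hr : r ∈ Ioo (0 : ℝ) (1 / 2)) :
    (1 - 2 * δ) * (r * (1 - r) * logOdds r) ≤
      bconv δ r * (1 - bconv δ r) * logOdds (bconv δ r) := by
  obtain ⟨hrs, hs⟩ := bconv_mem_Ioc hδ hr
  have hfactor : 1 - 2 * bconv δ r = (1 - 2 * δ) * (1 - 2 * r) := by rw [bconv_eq]; ring
  have h2r : 0 < 1 - 2 * r := by linarith [hr.2]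
  rcases hs.lt_or_eq with hs | hs
  · have hmono := monotoneOn_logOdds_mul_div hr ⟨hr.1.trans_le hrs, hs⟩ hrs
    have h1δ : 1 - 2 * δ = (1 - 2 * bconv δ r) / (1 - 2 * r) := by
      rw [hfactor]; field_simp
    simp only at hmono
    rw [div_le_div_iff₀ h2r (by linarith)] at hmono
    rw [h1δ, div_mul_eq_mul_div, div_le_iff₀ h2r]
    linarith
  · have h1δ : 1 - 2 * δ = 0 := by
      have : (1 - 2 * δ) * (1 - 2 * r) = 0 := by rw [← hfactor, hs]; ring
      exact (mul_eq_zero.1 this).resolve_right h2r.ne'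
    rw [h1δ, hs]
    norm_num [logOdds]

lemma monotoneOn_slope_mrsGerber {δ : ℝ} (hδ : δ ∈ Icc (0 : ℝ) (1 / 2)) :
    MonotoneOn (fun r => (1 - 2 * δ) * logOdds (bconv δ r) / logOdds r) (Ioo 0 (1 / 2)) := by
  refine monotoneOn_Ioo_of_hasDerivAt_nonneg (f' := fun r => (1 - 2 * δ) *
    ((bconv δ r * (1 - bconv δ r) * logOdds (bconv δ r) - (1 - 2 * δ) * (r * (1 - r) * logOdds r))
      / (r * (1 - r) * bconv δ r * (1 - bconv δ r))) / logOdds r ^ 2) ?_ ?_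
  · intro r hr
    obtain ⟨hrs, hs⟩ := bconv_mem_Ioc hδ hr
    obtain ⟨hr0, hr1⟩ := hr
    have hbconv : HasDerivAt (bconv δ) (1 - 2 * δ) r := by
      simp_rw [funext (bconv_eq δ)]
      simpa using ((hasDerivAt_id r).const_mul (1 - 2 * δ)).const_add δ
    have hs0 : bconv δ r ≠ 0 := by linarith
    have hs1 : bconv δ r ≠ 1 := by linarith
    refine ((((hasDerivAt_logOdds hs0 hs1).comp r hbconv).const_mul (1 - 2 * δ)).div
      (hasDerivAt_logOdds hr0.ne' (by linarith)) (logOdds_pos hr0 hr1).ne').congr_deriv ?_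
    have : 1 - r ≠ 0 := by linarith
    have : 1 - bconv δ r ≠ 0 := by linarith
    simp only [Function.comp_apply]
    field_simp
    ring
  · intro r hr
    obtain ⟨hrs, hs⟩ := bconv_mem_Ioc hδ hr
    have hkey := mul_logOdds_le_bconv hδ hr
    have hden : 0 < r * (1 - r) * bconv δ r * (1 - bconv δ r) := by
      have : 0 < bconv δ r := hr.1.trans_le hrs
      have : 0 < 1 - bconv δ r := by linarith
      have : 0 < 1 - r := by linarith [hr.2]
      have := hr.1
      positivity
    exact div_nonneg (mul_nonneg (by linarith [hδ.2]) (div_nonneg (by linarith) hden.le))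
      (sq_nonneg _)

noncomputable def mrsGerber (δ u : ℝ) : ℝ := h2 (bconv δ (h2inv u))

lemma hasDerivAt_mrsGerber {δ u : ℝ} (hδ : δ ∈ Icc (0 : ℝ) (1 / 2)) (hu : u ∈ Ioo (0 : ℝ) 1) :
    HasDerivAt (mrsGerber δ)
      ((1 - 2 * δ) * logOdds (bconv δ (h2inv u)) / logOdds (h2inv u)) u := by
  have hr := h2inv_mem_Ioo hu
  obtain ⟨hrs, hs⟩ := bconv_mem_Ioc hδ hr
  have hlog2 := log_pos one_lt_two
  have hL := logOdds_pos hr.1 hr.2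
  have hinv : HasDerivAt h2inv (logOdds (h2inv u) / log 2)⁻¹ u :=
    (hasDerivAt_h2 hr.1.ne' (by linarith [hr.2])).of_local_left_inverse
      (continuousOn_h2inv.continuousAt (Icc_mem_nhds hu.1 hu.2)) (by positivity)
      (Filter.eventually_of_mem (Ioo_mem_nhds hu.1 hu.2)
        fun v hv => h2_h2inv (Ioo_subset_Icc_self hv))
  have hbconv : HasDerivAt (fun v => bconv δ (h2inv v))
      ((1 - 2 * δ) * (logOdds (h2inv u) / log 2)⁻¹) u := by
    simp_rw [bconv_eq]
    exact (hinv.const_mul _).const_add δ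
  refine ((hasDerivAt_h2 (by linarith [hr.1]) (by linarith)).comp u hbconv).congr_deriv ?_
  field_simp

lemma convexOn_mrsGerber {δ : ℝ} (hδ : δ ∈ Icc (0 : ℝ) (1 / 2)) :
    ConvexOn ℝ (Icc 0 1) (mrsGerber δ) := by
  have hcont : ContinuousOn (mrsGerber δ) (Icc 0 1) :=
    continuous_h2.comp_continuousOn <|
      (by simp_rw [funext (bconv_eq δ)]; fun_prop : Continuous (bconv δ)).comp_continuousOn
        continuousOn_h2inv
  refine MonotoneOn.convexOn_of_deriv (convex_Icc 0 1) hcont ?_ ?_ <;> rw [interior_Icc]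
  · exact fun u hu => (hasDerivAt_mrsGerber hδ hu).differentiableAt.differentiableWithinAt
  · intro a ha b hb hab
    rw [(hasDerivAt_mrsGerber hδ ha).deriv, (hasDerivAt_mrsGerber hδ hb).deriv]
    exact monotoneOn_slope_mrsGerber hδ (h2inv_mem_Ioo ha) (h2inv_mem_Ioo hb)
      (monotoneOn_h2inv (Ioo_subset_Icc_self ha) (Ioo_subset_Icc_self hb) hab)

section FiniteEntropy

variable {α β T : Type*}

def boolMarg (q : Bool × α → ℝ) (a : α) : ℝ := q (false, a) + q (true, a)

/-- `P(true | a)`; it is `0` where `boolMarg q a = 0`, harmlessly, since it is only ever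
weighted by `boolMarg q a`. -/
noncomputable def boolCond (q : Bool × α → ℝ) (a : α) : ℝ := q (true, a) / boolMarg q a

lemma boolMarg_nonneg {q : Bool × α → ℝ} (hq : 0 ≤ q) (a : α) : 0 ≤ boolMarg q a :=
  add_nonneg (hq _) (hq _)

lemma boolCond_mem_Icc {q : Bool × α → ℝ} (hq : 0 ≤ q) (a : α) : boolCond q a ∈ Icc (0 : ℝ) 1 :=
  ⟨div_nonneg (hq _) (boolMarg_nonneg hq a),
    div_le_one_of_le₀ (le_add_of_nonneg_left (hq _)) (boolMarg_nonneg hq a)⟩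

lemma boolMarg_mul_bconv_boolCond {q : Bool × α → ℝ} (hq : 0 ≤ q) (δ : ℝ) (a : α) :
    boolMarg q a * bconv δ (boolCond q a) = δ * q (false, a) + (1 - δ) * q (true, a) := by
  rcases (boolMarg_nonneg hq a).eq_or_lt with h | h
  · have hsum : q (false, a) + q (true, a) = 0 := h.symm
    have hf : 0 ≤ q (false, a) := hq _
    have ht : 0 ≤ q (true, a) := hq _
    have h0 : q (false, a) = 0 := by linarith
    have h1 : q (true, a) = 0 := by linarith
    rw [← h, h0, h1]
    ring
  · rw [boolCond, bconv_eq]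
    field_simp
    rw [boolMarg]
    ring

variable [Fintype α] [Fintype β] [Fintype T]

noncomputable def entropy (p : α → ℝ) : ℝ := -∑ a, p a * logb 2 (p a)

lemma entropy_comp_equiv (e : α ≃ β) (p : β → ℝ) : entropy (p ∘ e) = entropy p := by
  rw [entropy, entropy, ← e.sum_comp]
  rfl

def marginalSnd (r : α × T → ℝ) (t : T) : ℝ := ∑ a, r (a, t)

noncomputable def condEntropy (r : α × T → ℝ) : ℝ := entropy r - entropy (marginalSnd r)

lemma condEntropy_eq_zero_of_unique [Unique α] (r : α × T → ℝ) : condEntropy r = 0 := by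
  have : marginalSnd r = r ∘ (Equiv.uniqueProd T α).symm := by
    funext t
    simp [marginalSnd, Equiv.uniqueProd]
  rw [condEntropy, this, entropy_comp_equiv, sub_self]

noncomputable def boolCondEntropy (q : Bool × α → ℝ) : ℝ :=
  ∑ a, boolMarg q a * h2 (boolCond q a)

lemma sum_boolMarg (q : Bool × α → ℝ) : ∑ a, boolMarg q a = ∑ p, q p := by
  rw [Fintype.sum_prod_type, Fintype.sum_bool, ← Finset.sum_add_distrib]
  exact Finset.sum_congr rfl fun a _ => add_comm _ _

lemma boolCondEntropy_nonneg {q : Bool × α → ℝ} (hq : 0 ≤ q) : 0 ≤ boolCondEntropy q :=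
  Finset.sum_nonneg fun a _ =>
    mul_nonneg (boolMarg_nonneg hq a) (h2_mem_Icc (boolCond_mem_Icc hq a)).1

lemma boolCondEntropy_le {q : Bool × α → ℝ} (hq : 0 ≤ q) : boolCondEntropy q ≤ ∑ p, q p := by
  rw [← sum_boolMarg]
  exact Finset.sum_le_sum fun a _ =>
    mul_le_of_le_one_right (boolMarg_nonneg hq a) (h2_le_one _)

lemma mul_logb_div {a m : ℝ} (ha : 0 ≤ a) (hm : 0 < m) :
    a * logb 2 (a / m) = a * logb 2 a - a * logb 2 m := by
  rcases ha.eq_or_lt with rfl | ha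
  · simp
  · rw [logb_div ha.ne' hm.ne']
    ring

lemma add_mul_h2_div {q₀ q₁ : ℝ} (h₀ : 0 ≤ q₀) (h₁ : 0 ≤ q₁) :
    (q₀ + q₁) * h2 (q₁ / (q₀ + q₁)) =
      -(q₀ * logb 2 q₀) - q₁ * logb 2 q₁ + (q₀ + q₁) * logb 2 (q₀ + q₁) := by
  rcases (add_nonneg h₀ h₁).eq_or_lt with hm | hm
  · obtain ⟨rfl, rfl⟩ : q₀ = 0 ∧ q₁ = 0 := ⟨by linarith, by linarith⟩
    simp
  · have hsub : 1 - q₁ / (q₀ + q₁) = q₀ / (q₀ + q₁) := by field_simp; ring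
    have e₀ := mul_logb_div h₀ hm
    have e₁ := mul_logb_div h₁ hm
    rw [h2, hsub, mul_sub, mul_neg, ← mul_assoc, ← mul_assoc, mul_div_cancel₀ _ hm.ne',
      mul_div_cancel₀ _ hm.ne', e₀, e₁]
    ring

lemma entropy_eq_entropy_boolMarg_add {q : Bool × α → ℝ} (hq : 0 ≤ q) :
    entropy q = entropy (boolMarg q) + boolCondEntropy q := by
  simp only [entropy, boolCondEntropy, boolCond, boolMarg, add_mul_h2_div (hq _) (hq _),
    Fintype.sum_prod_type, Fintype.sum_bool, Finset.sum_add_distrib, Finset.sum_sub_distrib,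
    Finset.sum_neg_distrib]
  ring

end FiniteEntropy

lemma sum_mul_h2_le {ι : Type*} [Fintype ι] {w p : ι → ℝ} (hw : 0 ≤ w)
    (hp : ∀ i, p i ∈ Icc (0 : ℝ) 1) :
    ∑ i, w i * h2 (p i) ≤ (∑ i, w i) * h2 ((∑ i, w i * p i) / ∑ i, w i) := by
  rcases (Finset.sum_nonneg fun i _ => hw i : 0 ≤ ∑ i, w i).eq_or_lt with h | h
  · have hw0 : ∀ i, w i = 0 := fun i =>
      (Finset.sum_eq_zero_iff_of_nonneg fun i _ => hw i).1 h.symm i (Finset.mem_univ i)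
    simp [hw0]
  · have := concaveOn_h2.le_map_centerMass (t := Finset.univ) (fun i _ => hw i) h fun i _ => hp i
    simp only [Finset.centerMass, smul_eq_mul, Function.comp_apply, inv_mul_eq_div] at this
    rwa [div_le_iff₀' h] at this

section ConditionalMrsGerber

variable {α X Y T : Type*} [Fintype α] [Fintype X] [Fintype Y] [Fintype T] {δ : ℝ}

lemma mrsGerber_boolCondEntropy_le (hδ : δ ∈ Icc (0 : ℝ) (1 / 2)) {q : Bool × α → ℝ}
    (hq : 0 ≤ q) (hq1 : ∑ p, q p = 1) :
    mrsGerber δ (boolCondEntropy q) ≤ ∑ a, boolMarg q a * h2 (bconv δ (boolCond q a)) := by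
  have := (convexOn_mrsGerber hδ).map_sum_le (t := Finset.univ) (w := boolMarg q)
    (p := fun a => h2 (boolCond q a)) (fun a _ => boolMarg_nonneg hq a)
    (by rw [sum_boolMarg, hq1]) fun a _ => h2_mem_Icc (boolCond_mem_Icc hq a)
  simp only [smul_eq_mul] at this
  refine this.trans_eq (Finset.sum_congr rfl fun a _ => ?_)
  rw [mrsGerber, h2_bconv_h2inv_h2 δ (boolCond_mem_Icc hq a)]

/-- The `Bool` coordinate of `qX` is that of `q` passed through a binary symmetric channel with
crossover `δ`, while the rest is passed through the channel `K`; concavity of `h2` on each fibre. -/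
lemma sum_h2_bconv_le_boolCondEntropy (hδ : δ ∈ Icc (0 : ℝ) 1) {K : Y → X → ℝ} (hK : 0 ≤ K)
    (hK1 : ∀ y, ∑ x, K y x = 1) {q : Bool × (Y × T) → ℝ} (hq : 0 ≤ q) (qX : Bool × (X × T) → ℝ)
    (hmarg : ∀ x t, boolMarg qX (x, t) = ∑ y, K y x * boolMarg q (y, t))
    (htrue : ∀ x t, qX (true, (x, t)) =
      ∑ y, K y x * (δ * q (false, (y, t)) + (1 - δ) * q (true, (y, t)))) :
    ∑ a, boolMarg q a * h2 (bconv δ (boolCond q a)) ≤ boolCondEntropy qX := by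
  calc ∑ a, boolMarg q a * h2 (bconv δ (boolCond q a))
      = ∑ x, ∑ t, ∑ y, K y x * boolMarg q (y, t) * h2 (bconv δ (boolCond q (y, t))) := by
        have hsplit : ∀ a : Y × T, boolMarg q a * h2 (bconv δ (boolCond q a)) =
            ∑ x, K a.1 x * boolMarg q a * h2 (bconv δ (boolCond q a)) := fun a => by
          rw [← Finset.sum_mul, ← Finset.sum_mul, hK1, one_mul]
        rw [Finset.sum_congr rfl fun a _ => hsplit a, Finset.sum_comm]
        exact Finset.sum_congr rfl fun x _ => by rw [Fintype.sum_prod_type, Finset.sum_comm]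
    _ ≤ ∑ x, ∑ t, boolMarg qX (x, t) * h2 (boolCond qX (x, t)) := by
        refine Finset.sum_le_sum fun x _ => Finset.sum_le_sum fun t _ => ?_
        have := sum_mul_h2_le (fun y => mul_nonneg (hK y x) (boolMarg_nonneg hq (y, t)))
          fun y => bconv_mem_Icc hδ (boolCond_mem_Icc hq (y, t))
        simp only [mul_assoc, boolMarg_mul_bconv_boolCond hq] at this
        rw [boolCond, hmarg, htrue]
        simpa only [mul_assoc] using this
    _ = boolCondEntropy qX := by rw [boolCondEntropy, Fintype.sum_prod_type]

end ConditionalMrsGerber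

section BinarySymmetricChannel

variable {T : Type*} {δ : ℝ} {n : ℕ}

noncomputable def bernProd (δ : ℝ) {m : ℕ} (g : Fin m → Bool) : ℝ :=
  ∏ k, if g k then δ else 1 - δ

lemma bernProd_nonneg (hδ : δ ∈ Icc (0 : ℝ) 1) {m : ℕ} (g : Fin m → Bool) : 0 ≤ bernProd δ g :=
  Finset.prod_nonneg fun k _ => by split_ifs <;> linarith [hδ.1, hδ.2]

lemma bernProd_cons (δ : ℝ) (b : Bool) (g : Fin n → Bool) :
    bernProd δ (Fin.cons b g) = (if b then δ else 1 - δ) * bernProd δ g := by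
  simp [bernProd, Fin.prod_univ_succ]

lemma sum_bernProd_xor (δ : ℝ) {m : ℕ} (y : Fin m → Bool) :
    ∑ x : Fin m → Bool, bernProd δ (fun k => y k ^^ x k) = 1 := by
  classical
  simp only [bernProd, ← Fintype.prod_sum fun k (b : Bool) => if y k ^^ b then δ else 1 - δ,
    Fintype.sum_bool]
  exact Finset.prod_eq_one fun k _ => by cases y k <;> simp

/-- The joint mass function of `(Y ⊕ N, W)` when `(Y, W)` has mass function `r` and `N` is
independent of `(Y, W)` with i.i.d. `Ber(δ)` components. -/
noncomputable def noisy (δ : ℝ) {m : ℕ} (r : (Fin m → Bool) × T → ℝ) :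
    (Fin m → Bool) × T → ℝ :=
  fun z => ∑ y, bernProd δ (fun k => y k ^^ z.1 k) * r (y, z.2)

lemma noisy_nonneg (hδ : δ ∈ Icc (0 : ℝ) 1) {m : ℕ} {r : (Fin m → Bool) × T → ℝ} (hr : 0 ≤ r) :
    0 ≤ noisy δ r :=
  fun _ => Finset.sum_nonneg fun _ _ => mul_nonneg (bernProd_nonneg hδ _) (hr _)

def headSplit (r : (Fin (n + 1) → Bool) × T → ℝ) : Bool × ((Fin n → Bool) × T) → ℝ :=
  fun p => r (Fin.cons p.1 p.2.1, p.2.2)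

def consProdEquiv (n : ℕ) (T : Type*) : Bool × ((Fin n → Bool) × T) ≃ (Fin (n + 1) → Bool) × T :=
  (Equiv.prodAssoc _ _ _).symm.trans ((Fin.consEquiv fun _ => Bool).prodCongr (Equiv.refl T))

lemma headSplit_eq_comp (r : (Fin (n + 1) → Bool) × T → ℝ) :
    headSplit r = r ∘ consProdEquiv n T :=
  rfl

lemma sum_headSplit [Fintype T] (r : (Fin (n + 1) → Bool) × T → ℝ) :
    ∑ p, headSplit r p = ∑ z, r z :=
  (consProdEquiv n T).sum_comp r

lemma marginalSnd_boolMarg_headSplit (r : (Fin (n + 1) → Bool) × T → ℝ) :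
    marginalSnd (boolMarg (headSplit r)) = marginalSnd r := by
  funext t
  rw [marginalSnd, marginalSnd, ← (Fin.consEquiv fun _ => Bool).sum_comp, Fintype.sum_prod_type,
    Fintype.sum_bool, ← Finset.sum_add_distrib]
  exact Finset.sum_congr rfl fun y _ => add_comm _ _

lemma condEntropy_eq_add_boolCondEntropy [Fintype T] {r : (Fin (n + 1) → Bool) × T → ℝ} (hr : 0 ≤ r) :
    condEntropy r = condEntropy (boolMarg (headSplit r)) + boolCondEntropy (headSplit r) := by
  have hq : 0 ≤ headSplit r := fun _ => hr _
  rw [condEntropy, condEntropy, ← entropy_comp_equiv (consProdEquiv n T), ← headSplit_eq_comp,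
    entropy_eq_entropy_boolMarg_add hq, marginalSnd_boolMarg_headSplit]
  ring

lemma headSplit_noisy (r : (Fin (n + 1) → Bool) × T → ℝ) (b : Bool) (x : Fin n → Bool) (t : T) :
    headSplit (noisy δ r) (b, (x, t)) = ∑ y, bernProd δ (fun k => y k ^^ x k) *
      ∑ c, (if c ^^ b then δ else 1 - δ) * headSplit r (c, (y, t)) := by
  have hxor : ∀ (c : Bool) (y : Fin n → Bool),
      (fun k => (Fin.cons c y : Fin (n + 1) → Bool) k ^^ (Fin.cons b x : Fin (n + 1) → Bool) k) =
        Fin.cons (c ^^ b) fun k => y k ^^ x k :=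
    fun c y => funext fun k => Fin.cases (by simp) (fun k => by simp) k
  simp only [headSplit, noisy]
  rw [← (Fin.consEquiv fun _ => Bool).sum_comp, Fintype.sum_prod_type, Finset.sum_comm]
  refine Finset.sum_congr rfl fun y _ => ?_
  simp only [Fin.consEquiv_apply, hxor, bernProd_cons, Finset.mul_sum]
  exact Finset.sum_congr rfl fun c _ => by
    rw [show (Fin.consEquiv fun _ => Bool) (c, y) = Fin.cons c y from rfl]; ring

lemma boolMarg_headSplit_noisy (r : (Fin (n + 1) → Bool) × T → ℝ) :
    boolMarg (headSplit (noisy δ r)) = noisy δ (boolMarg (headSplit r)) := by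
  funext ⟨x, t⟩
  rw [boolMarg, headSplit_noisy, headSplit_noisy, ← Finset.sum_add_distrib]
  refine Finset.sum_congr rfl fun y _ => ?_
  simp only [Fintype.sum_bool, Bool.xor_false, Bool.xor_true, Bool.not_true, Bool.not_false,
    Bool.false_eq_true, if_true, if_false, boolMarg]
  ring

lemma headSplit_noisy_true (r : (Fin (n + 1) → Bool) × T → ℝ) (x : Fin n → Bool) (t : T) :
    headSplit (noisy δ r) (true, (x, t)) = ∑ y, bernProd δ (fun k => y k ^^ x k) *
      (δ * headSplit r (false, (y, t)) + (1 - δ) * headSplit r (true, (y, t))) := by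
  rw [headSplit_noisy]
  refine Finset.sum_congr rfl fun y _ => ?_
  simp only [Fintype.sum_bool, Bool.xor_true, Bool.not_true, Bool.not_false,
    Bool.false_eq_true, if_true, if_false]
  ring

lemma mrsGerber_boolCondEntropy_headSplit_le [Fintype T] (hδ : δ ∈ Icc (0 : ℝ) (1 / 2))
    {r : (Fin (n + 1) → Bool) × T → ℝ} (hr : 0 ≤ r) (hr1 : ∑ z, r z = 1) :
    mrsGerber δ (boolCondEntropy (headSplit r)) ≤ boolCondEntropy (headSplit (noisy δ r)) := by
  have hδ' : δ ∈ Icc (0 : ℝ) 1 := ⟨hδ.1, hδ.2.trans (by norm_num)⟩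
  have hq : 0 ≤ headSplit r := fun _ => hr _
  have hmarg : ∀ x t, boolMarg (headSplit (noisy δ r)) (x, t) =
      ∑ y, bernProd δ (fun k => y k ^^ x k) * boolMarg (headSplit r) (y, t) := fun x t => by
    rw [boolMarg_headSplit_noisy]
    rfl
  refine (mrsGerber_boolCondEntropy_le hδ hq (by rw [sum_headSplit, hr1])).trans
    (sum_h2_bconv_le_boolCondEntropy hδ' (fun y x => bernProd_nonneg hδ' _) (sum_bernProd_xor δ)
      hq _ hmarg (headSplit_noisy_true r))

end BinarySymmetricChannel

lemma ConvexOn.add_one_mul_map_le {f : ℝ → ℝ} (hf : ConvexOn ℝ (Icc 0 1) f) {n : ℕ} {a b : ℝ}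
    (ha : a ∈ Icc 0 (n : ℝ)) (hb : b ∈ Icc (0 : ℝ) 1) :
    ((n : ℝ) + 1) * f ((a + b) / (n + 1)) ≤ n * f (a / n) + f b := by
  have hna : (n : ℝ) * (a / n) = a := by
    rcases (Nat.cast_nonneg n : (0 : ℝ) ≤ n).eq_or_lt with h | h
    · rw [← h, zero_mul]; linarith [ha.1, ha.2, h]
    · exact mul_div_cancel₀ a h.ne'
  have ha' : a / n ∈ Icc (0 : ℝ) 1 :=
    ⟨div_nonneg ha.1 n.cast_nonneg, div_le_one_of_le₀ ha.2 n.cast_nonneg⟩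
  have := hf.2 ha' hb (by positivity : (0 : ℝ) ≤ n / (n + 1)) (by positivity : (0 : ℝ) ≤ 1 / (n + 1))
    (by field_simp)
  simp only [smul_eq_mul] at this
  rw [div_mul_eq_mul_div, hna, one_div_mul_eq_div, ← add_div] at this
  calc ((n : ℝ) + 1) * f ((a + b) / (n + 1))
      ≤ (n + 1) * (n / (n + 1) * f (a / n) + 1 / (n + 1) * f b) := by gcongr
    _ = n * f (a / n) + f b := by field_simp

section Superadditivity

variable {T : Type*} [Fintype T]

lemma condEntropy_mem_Icc {m : ℕ} {r : (Fin m → Bool) × T → ℝ} (hr : 0 ≤ r) (hr1 : ∑ z, r z = 1) :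
    condEntropy r ∈ Icc 0 (m : ℝ) := by
  induction m with
  | zero => simp [condEntropy_eq_zero_of_unique]
  | succ n ih =>
    have hq : 0 ≤ headSplit r := fun _ => hr _
    obtain ⟨h0, h1⟩ := ih (boolMarg_nonneg hq) (by rw [sum_boolMarg, sum_headSplit, hr1])
    have hb0 := boolCondEntropy_nonneg hq
    have hb1 := boolCondEntropy_le hq
    rw [sum_headSplit, hr1] at hb1
    rw [condEntropy_eq_add_boolCondEntropy hr]
    push_cast
    constructor <;> linarith

theorem mul_mrsGerber_le_condEntropy_noisy {δ : ℝ} (hδ : δ ∈ Icc (0 : ℝ) (1 / 2)) {m : ℕ}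
    {r : (Fin m → Bool) × T → ℝ} (hr : 0 ≤ r) (hr1 : ∑ z, r z = 1) :
    m * mrsGerber δ (condEntropy r / m) ≤ condEntropy (noisy δ r) := by
  induction m with
  | zero => simp [condEntropy_eq_zero_of_unique]
  | succ n ih =>
    have hq : 0 ≤ headSplit r := fun _ => hr _
    have hr' : 0 ≤ boolMarg (headSplit r) := boolMarg_nonneg hq
    have hr'1 : ∑ z, boolMarg (headSplit r) z = 1 := by rw [sum_boolMarg, sum_headSplit, hr1]
    have hb : boolCondEntropy (headSplit r) ∈ Icc (0 : ℝ) 1 :=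
      ⟨boolCondEntropy_nonneg hq, (boolCondEntropy_le hq).trans_eq (by rw [sum_headSplit, hr1])⟩
    rw [condEntropy_eq_add_boolCondEntropy hr,
      condEntropy_eq_add_boolCondEntropy (noisy_nonneg ⟨hδ.1, hδ.2.trans (by norm_num)⟩ hr),
      boolMarg_headSplit_noisy]
    push_cast
    calc ((n : ℝ) + 1) * mrsGerber δ
          ((condEntropy (boolMarg (headSplit r)) + boolCondEntropy (headSplit r)) / (n + 1))
        ≤ n * mrsGerber δ (condEntropy (boolMarg (headSplit r)) / n) +
            mrsGerber δ (boolCondEntropy (headSplit r)) :=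
          (convexOn_mrsGerber hδ).add_one_mul_map_le (condEntropy_mem_Icc hr' hr'1) hb
      _ ≤ _ := add_le_add (ih hr' hr'1) (mrsGerber_boolCondEntropy_headSplit_le hδ hr hr1)

end Superadditivity

section MassFunction

variable {Ω S T : Type*} [MeasurableSpace Ω] {μ : Measure Ω}

def massFun (μ : Measure Ω) (X : Ω → S) (s : S) : ℝ := μ.real (X ⁻¹' {s})

variable [Fintype S] [MeasurableSpace S] [MeasurableSingletonClass S]

lemma massFun_comp_eq_sum [IsFiniteMeasure μ] {X : Ω → S} (hX : Measurable X) {S' : Type*}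
    [DecidableEq S'] (f : S → S') (s' : S') :
    massFun μ (fun ω => f (X ω)) s' = ∑ s, if f s = s' then massFun μ X s else 0 := by
  simp only [← Finset.sum_filter, massFun]
  rw [sum_measureReal_preimage_singleton _ fun s _ => hX (measurableSet_singleton s)]
  congr 1
  ext ω
  simp

lemma sum_massFun [IsProbabilityMeasure μ] {X : Ω → S} (hX : Measurable X) :
    ∑ s, massFun μ X s = 1 := by
  simp only [massFun]
  rw [sum_measureReal_preimage_singleton _ fun s _ => hX (measurableSet_singleton s)]
  simp

lemma condH2_eq_condEntropy_massFun [IsFiniteMeasure μ] [Fintype T] [MeasurableSpace T]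
    [MeasurableSingletonClass T] {X : Ω → S} {W : Ω → T} (hX : Measurable X) (hW : Measurable W) :
    condH2 μ X W = condEntropy (massFun μ fun ω => (X ω, W ω)) := by
  classical
  have hmarg : massFun μ W = marginalSnd (massFun μ fun ω => (X ω, W ω)) := by
    funext t
    rw [show W = fun ω => Prod.snd (X ω, W ω) from rfl, massFun_comp_eq_sum (hX.prodMk hW),
      Fintype.sum_prod_type, marginalSnd]
    simp
  rw [condH2, condEntropy, ← hmarg]
  rfl

end MassFunction

lemma massFun_xor_eq_noisy {Ω T : Type*} [MeasurableSpace Ω] [Fintype T] [MeasurableSpace T]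
    [MeasurableSingletonClass T] {μ : Measure Ω} [IsFiniteMeasure μ] {δ : ℝ} {m : ℕ}
    {Y N : Ω → (Fin m → Bool)} {W : Ω → T}
    (hY : Measurable Y) (hN : Measurable N) (hW : Measurable W)
    (hNdist : ∀ g, massFun μ N g = bernProd δ g)
    (hindep : ∀ g y w, μ.real (N ⁻¹' {g} ∩ (fun ω => (Y ω, W ω)) ⁻¹' {(y, w)})
        = massFun μ N g * massFun μ (fun ω => (Y ω, W ω)) (y, w)) :
    massFun μ (fun ω => ((fun k => Y ω k ^^ N ω k), W ω)) =
      noisy δ (massFun μ fun ω => (Y ω, W ω)) := by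
  classical
  funext ⟨x, w⟩
  have hA : Measurable fun ω => (N ω, (Y ω, W ω)) := hN.prodMk (hY.prodMk hW)
  have hjoint : ∀ g z, massFun μ (fun ω => (N ω, (Y ω, W ω))) (g, z) =
      bernProd δ g * massFun μ (fun ω => (Y ω, W ω)) z := fun g z => by
    rw [← hNdist, ← hindep, massFun]
    congr 1
    ext ω
    simp [Prod.ext_iff]
  have hxor : ∀ y g : Fin m → Bool, ((fun k => y k ^^ g k) = x) ↔ g = fun k => y k ^^ x k :=
    fun y g => by
      constructor <;> rintro rfl <;> funext k <;> simp
  have hsum := massFun_comp_eq_sum (μ := μ) hA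
    (fun p : (Fin m → Bool) × (Fin m → Bool) × T => ((fun k => p.2.1 k ^^ p.1 k), p.2.2)) (x, w)
  rw [hsum, Fintype.sum_prod_type]
  simp only [hjoint, Prod.mk.injEq, hxor, Fintype.sum_prod_type, noisy]
  rw [Finset.sum_comm]
  refine Finset.sum_congr rfl fun y _ => ?_
  rw [Finset.sum_comm]
  simp [ite_and]

theorem stmt17_general {Ω TW : Type*} [MeasurableSpace Ω] [Fintype TW]
    [MeasurableSpace TW] [MeasurableSingletonClass TW]
    (μ : Measure Ω) [IsProbabilityMeasure μ]
    (δ : ℝ) (hδ : δ ∈ Set.Icc (0 : ℝ) (1 / 2))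
    (m : ℕ)
    (Y N : Ω → (Fin m → Bool)) (W : Ω → TW)
    (hY : Measurable Y) (hN : Measurable N) (hW : Measurable W)
    -- the components of `N` are i.i.d. `Ber(δ)`:
    (hNdist : ∀ g : Fin m → Bool,
      (μ (N ⁻¹' {g})).toReal = ∏ k : Fin m, (if g k then δ else 1 - δ))
    -- `N` is independent of the pair `(Y, W)`:
    (hindep : ∀ (g y : Fin m → Bool) (w : TW),
      (μ (N ⁻¹' {g} ∩ (fun ω => (Y ω, W ω)) ⁻¹' {(y, w)})).toReal
        = (μ (N ⁻¹' {g})).toReal * (μ ((fun ω => (Y ω, W ω)) ⁻¹' {(y, w)})).toReal) :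
    (m : ℝ) * h2 (bconv δ (h2inv (condH2 μ Y W / m)))
      ≤ condH2 μ (fun ω k => Y ω k ^^ N ω k) W := by
  have hX : Measurable fun ω k => Y ω k ^^ N ω k := by fun_prop
  rw [condH2_eq_condEntropy_massFun hY hW, condH2_eq_condEntropy_massFun hX hW,
    massFun_xor_eq_noisy hY hN hW hNdist hindep]
  exact mul_mrsGerber_le_condEntropy_noisy hδ (fun _ => measureReal_nonneg)
    (sum_massFun (hY.prodMk hW))

/-- `m`-letter superadditivity of Witsenhausen's conditional entropy bound for
the binary symmetric channel: if `N = (N1, …, Nm)` has i.i.d. `Ber(δ)`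
components and is independent of `(Y, W)`, and `Xk = Yk ⊕ Nk`, then
`H(X1,…,Xm | W) ≥ m · h2(δ ⋆ h2⁻¹(H(Y1,…,Ym | W) / m))`. -/
theorem stmt17 {Ω TW : Type*} [MeasurableSpace Ω] [Fintype TW]
    [MeasurableSpace TW] [MeasurableSingletonClass TW]
    (μ : Measure Ω) [IsProbabilityMeasure μ]
    (δ : ℝ) (hδ : δ ∈ Set.Icc (0 : ℝ) (1 / 2))
    (m : ℕ) (hm : 0 < m)
    (Y N : Ω → (Fin m → Bool)) (W : Ω → TW)
    (hY : Measurable Y) (hN : Measurable N) (hW : Measurable W)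
    -- the components of `N` are i.i.d. `Ber(δ)`:
    (hNdist : ∀ g : Fin m → Bool,
      (μ (N ⁻¹' {g})).toReal = ∏ k : Fin m, (if g k then δ else 1 - δ))
    -- `N` is independent of the pair `(Y, W)`:
    (hindep : ∀ (g y : Fin m → Bool) (w : TW),
      (μ (N ⁻¹' {g} ∩ (fun ω => (Y ω, W ω)) ⁻¹' {(y, w)})).toReal
        = (μ (N ⁻¹' {g})).toReal * (μ ((fun ω => (Y ω, W ω)) ⁻¹' {(y, w)})).toReal) :
    (m : ℝ) * h2 (bconv δ (h2inv (condH2 μ Y W / m)))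
      ≤ condH2 μ (fun ω k => Y ω k ^^ N ω k) W :=
  stmt17_general μ δ hδ m Y N W hY hN hW hNdist hindep
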